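/- With p as above, p satisfies p(r²/conj(z)) + conj(p(z)) = −1/z₀ − 1/conj(z₀) for all z in its domain; in particular Re p(z) = Re(−1/z₀) on the circle |z| = r. -/

import Mathlib

/-!
`ϑ₁` factors as `ϑ₁(z) = P(1) (1 - 1/z) P(z) P(1/z)` with the entire function
`P(w) = ∏ₖ (1 - r^{2(k+1)} w)`, and the index shift `P(w/r²) = (1 - w) P(w)` gives
`ϑ₁(z/r²) = -z ϑ₁(z)`. For the logarithmic derivative `L = ϑ₁'/ϑ₁` this becomes
`L(x/r²) = r² (1/x + L x)`, while `L(z̄) = conj (L z)` since `P` has real coefficients.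
With `w = r²/z̄`, the arguments of `p(w)` are `r² · conj (z₀/z)` and `conj (z̄₀ z) / r²`, so `p(w)` is
expressed through the conjugates of the two values of `L` in `p(z)`; these cancel against
`conj (p z)` and leave `-1/z₀ - 1/z̄₀`. On `|z| = r` we have `r²/z̄ = z`, and the identity says
`2 Re p(z) = 2 Re(-1/z₀)`.
-/

open Set Complex

/-- The constant `C = ∏_{k=1}^∞ (1 − r^{2k})`. -/
noncomputable def thetaConst (r : ℝ) : ℂ := ∏' k : ℕ, (1 - (r : ℂ) ^ (2 * (k + 1)))

/-- The annular Jacobi theta function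
`ϑ₁(z) = C (1 − 1/z) ∏_{k=1}^∞ (1 − r^{2k} z)(1 − r^{2k}/z)`. -/
noncomputable def theta1 (r : ℝ) (z : ℂ) : ℂ :=
  thetaConst r * (1 - 1 / z) *
    ∏' k : ℕ, ((1 - (r : ℂ) ^ (2 * (k + 1)) * z) * (1 - (r : ℂ) ^ (2 * (k + 1)) / z))

/-- `p(z) = z ϑ₁'(z̄₀ z)/ϑ₁(z̄₀ z) − ϑ₁'(z₀/z)/(z ϑ₁(z₀/z))`. -/
noncomputable def pfun (r : ℝ) (z₀ z : ℂ) : ℂ :=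
  z * deriv (theta1 r) ((starRingEnd ℂ) z₀ * z) / theta1 r ((starRingEnd ℂ) z₀ * z)
    - deriv (theta1 r) (z₀ / z) / (z * theta1 r (z₀ / z))

open Filter Topology ComplexConjugate

noncomputable def thetaProd (r : ℝ) (w : ℂ) : ℂ := ∏' k : ℕ, (1 - (r : ℂ) ^ (2 * (k + 1)) * w)

section
variable {r : ℝ}

lemma summable_thetaProd_coeff_mul (hr : |r| < 1) (w : ℂ) :
    Summable fun k : ℕ => (r : ℂ) ^ (2 * (k + 1)) * w := by
  have hq : ‖(r : ℂ) ^ 2‖ < 1 := by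
    rwa [norm_pow, norm_real, Real.norm_eq_abs, sq_lt_one_iff_abs_lt_one, abs_abs]
  refine ((summable_geometric_of_norm_lt_one hq).mul_left ((r : ℂ) ^ 2 * w)).congr fun k => ?_
  ring

lemma multipliable_thetaProd (hr : |r| < 1) (w : ℂ) :
    Multipliable fun k : ℕ => 1 - (r : ℂ) ^ (2 * (k + 1)) * w := by
  simpa [sub_eq_add_neg] using
    Complex.multipliable_one_add_of_summable (summable_thetaProd_coeff_mul hr w).neg

lemma thetaProd_div_sq (hr : |r| < 1) (hr0 : r ≠ 0) (w : ℂ) :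
    thetaProd r (w / (r : ℂ) ^ 2) = (1 - w) * thetaProd r w := by
  have hr0' : (r : ℂ) ≠ 0 := ofReal_ne_zero.2 hr0
  have hshift : (fun k : ℕ => 1 - (r : ℂ) ^ (2 * (k + 1 + 1)) * (w / (r : ℂ) ^ 2))
      = fun k : ℕ => 1 - (r : ℂ) ^ (2 * (k + 1)) * w := by
    funext k
    rw [show 2 * (k + 1 + 1) = 2 * (k + 1) + 2 by ring, pow_add]
    field_simp
  rw [thetaProd, tprod_eq_zero_mul' (hshift ▸ multipliable_thetaProd hr w), hshift]
  congr 1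
  field_simp
  ring

lemma differentiable_thetaProd (hr : |r| < 1) : Differentiable ℂ (thetaProd r) := by
  intro w
  have hprod := Summable.hasProdLocallyUniformlyOn_nat_one_add
    (f := fun k x => -((r : ℂ) ^ (2 * (k + 1)) * x)) (K := Metric.ball 0 (‖w‖ + 1))
    Metric.isOpen_ball ((summable_thetaProd_coeff_mul hr 1).norm.mul_right (‖w‖ + 1))
    (.of_forall fun k x hx => ?_) (fun k => by fun_prop)
  · have hdiff := hprod.differentiableOn (.of_forall fun s => by fun_prop) Metric.isOpen_ball
    rw [show (fun x => ∏' k, (1 + -((r : ℂ) ^ (2 * (k + 1)) * x))) = thetaProd r by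
      simp only [← sub_eq_add_neg]; rfl] at hdiff
    exact hdiff.differentiableAt (Metric.isOpen_ball.mem_nhds (by simp))
  · rw [norm_neg, norm_mul, mul_one]
    gcongr
    simpa using (mem_ball_zero_iff.1 hx).le

lemma thetaProd_conj (hr : |r| < 1) (w : ℂ) :
    thetaProd r (conj w) = conj (thetaProd r w) := by
  simp only [thetaProd, (multipliable_thetaProd hr w).map_tprod _ continuous_conj, map_sub,
    map_mul, map_pow, conj_ofReal, map_one]

lemma theta1_eq_thetaProd (hr : |r| < 1) (z : ℂ) :
    theta1 r z = thetaProd r 1 * (1 - 1 / z) * (thetaProd r z * thetaProd r z⁻¹) := by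
  rw [theta1, thetaProd, thetaProd, thetaProd, ← (multipliable_thetaProd hr z).tprod_mul
    (multipliable_thetaProd hr z⁻¹)]
  simp only [thetaConst, mul_one, div_eq_mul_inv]

lemma theta1_conj (hr : |r| < 1) (z : ℂ) : theta1 r (conj z) = conj (theta1 r z) := by
  have hC : conj (thetaProd r 1) = thetaProd r 1 := by simpa using (thetaProd_conj hr 1).symm
  simp only [theta1_eq_thetaProd hr, ← map_inv₀, thetaProd_conj hr, map_mul, map_sub, map_div₀,
    map_one, hC]

lemma theta1_div_sq (hr : |r| < 1) (hr0 : r ≠ 0) {z : ℂ} (hz : z ≠ 0) :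
    theta1 r (z / (r : ℂ) ^ 2) = -z * theta1 r z := by
  have hr0' : (r : ℂ) ≠ 0 := ofReal_ne_zero.2 hr0
  have hinv : z⁻¹ = ((r : ℂ) ^ 2 / z) / (r : ℂ) ^ 2 := by field_simp
  rw [theta1_eq_thetaProd hr, theta1_eq_thetaProd hr, thetaProd_div_sq hr hr0, inv_div, hinv,
    thetaProd_div_sq hr hr0]
  field_simp
  ring

lemma differentiableAt_theta1 (hr : |r| < 1) {z : ℂ} (hz : z ≠ 0) :
    DifferentiableAt ℂ (theta1 r) z := by
  have hP := differentiable_thetaProd hr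
  rw [funext (theta1_eq_thetaProd hr)]
  fun_prop (disch := assumption)

lemma logDeriv_theta1_conj (hr : |r| < 1) (z : ℂ) :
    logDeriv (theta1 r) (conj z) = conj (logDeriv (theta1 r) z) := by
  have hsymm : conj ∘ theta1 r ∘ conj = theta1 r := funext fun w => by
    simp [theta1_conj hr]
  have hderiv := congrFun (deriv_conj_conj (f := theta1 r)) (conj z)
  rw [hsymm] at hderiv
  simp [logDeriv_apply, hderiv, theta1_conj hr]

lemma logDeriv_theta1_div_sq (hr : |r| < 1) (hr0 : r ≠ 0) {x : ℂ} (hx : x ≠ 0)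
    (hθ : theta1 r x ≠ 0) :
    logDeriv (theta1 r) (x / (r : ℂ) ^ 2) = (r : ℂ) ^ 2 * (1 / x + logDeriv (theta1 r) x) := by
  have hr2 : (r : ℂ) ^ 2 ≠ 0 := pow_ne_zero 2 (ofReal_ne_zero.2 hr0)
  have hnear : (fun w => theta1 r (w / (r : ℂ) ^ 2)) =ᶠ[𝓝 x] fun w => -w * theta1 r w := by
    filter_upwards [isOpen_ne.mem_nhds hx] with w hw using theta1_div_sq hr hr0 hw
  have hcomp : logDeriv (fun w => theta1 r (w / (r : ℂ) ^ 2)) x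
      = logDeriv (theta1 r) (x / (r : ℂ) ^ 2) / (r : ℂ) ^ 2 := by
    rw [show (fun w => theta1 r (w / (r : ℂ) ^ 2)) = theta1 r ∘ fun w => w / (r : ℂ) ^ 2 from rfl,
      logDeriv_comp (g := fun w => w / (r : ℂ) ^ 2)
        (differentiableAt_theta1 hr (div_ne_zero hx hr2)) (by fun_prop)]
    simp [div_eq_mul_inv]
  have hmul : logDeriv (fun w => -w * theta1 r w) x = 1 / x + logDeriv (theta1 r) x := by
    rw [logDeriv_mul x (neg_ne_zero.2 hx) hθ (by fun_prop) (differentiableAt_theta1 hr hx)]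
    simp [logDeriv_apply]
  rw [(logDeriv_congr_nhds hnear).eq_of_nhds, hmul, eq_div_iff hr2] at hcomp
  rw [← hcomp]
  ring

lemma pfun_eq_logDeriv (z₀ z : ℂ) :
    pfun r z₀ z = z * logDeriv (theta1 r) (conj z₀ * z) - logDeriv (theta1 r) (z₀ / z) / z := by
  simp only [pfun, logDeriv_apply]
  ring

lemma pfun_reflect (hr : |r| < 1) (hr0 : r ≠ 0) {z₀ z : ℂ} (hz₀ : z₀ ≠ 0) (hz : z ≠ 0)
    (hθ : theta1 r (conj z₀ * z) ≠ 0)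
    (hθ' : theta1 r (conj z₀ * ((r : ℂ) ^ 2 / conj z)) ≠ 0) :
    pfun r z₀ ((r : ℂ) ^ 2 / conj z) + conj (pfun r z₀ z) = -1 / z₀ - 1 / conj z₀ := by
  have hr0' : (r : ℂ) ≠ 0 := ofReal_ne_zero.2 hr0
  have hz' : conj z ≠ 0 := (map_ne_zero _).2 hz
  have hz₀' : conj z₀ ≠ 0 := (map_ne_zero _).2 hz₀
  have hL_conj_quot := logDeriv_theta1_div_sq hr hr0 (by positivity) hθ'
  rw [show conj z₀ * ((r : ℂ) ^ 2 / conj z) / (r : ℂ) ^ 2 = conj (z₀ / z) by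
    rw [map_div₀]; field_simp, logDeriv_theta1_conj hr] at hL_conj_quot
  have hL_reflected := logDeriv_theta1_div_sq hr hr0 (x := conj (conj z₀ * z)) (by simp [hz₀, hz])
    (by rwa [theta1_conj hr, map_ne_zero])
  rw [show conj (conj z₀ * z) / (r : ℂ) ^ 2 = z₀ / ((r : ℂ) ^ 2 / conj z) by
    rw [map_mul, conj_conj]; field_simp, logDeriv_theta1_conj hr] at hL_reflected
  rw [pfun_eq_logDeriv, pfun_eq_logDeriv, hL_reflected]
  simp only [map_sub, map_mul, map_div₀, conj_conj]
  rw [hL_conj_quot]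
  field_simp
  ring

end

theorem stmt14_general (r : ℝ) (hr0 : 0 < r) (hr1 : r < 1)
    (z₀ : ℂ) (hz₀l : r < ‖z₀‖) :
    (∀ z : ℂ, z ≠ 0 →
      theta1 r ((starRingEnd ℂ) z₀ * z) ≠ 0 → theta1 r (z₀ / z) ≠ 0 →
      theta1 r ((starRingEnd ℂ) z₀ * ((r : ℂ) ^ 2 / (starRingEnd ℂ) z)) ≠ 0 →
      theta1 r (z₀ / ((r : ℂ) ^ 2 / (starRingEnd ℂ) z)) ≠ 0 →
      pfun r z₀ ((r : ℂ) ^ 2 / (starRingEnd ℂ) z) + (starRingEnd ℂ) (pfun r z₀ z)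
        = -1 / z₀ - 1 / (starRingEnd ℂ) z₀) ∧
    ∀ z : ℂ, ‖z‖ = r →
      theta1 r ((starRingEnd ℂ) z₀ * z) ≠ 0 → theta1 r (z₀ / z) ≠ 0 →
      (pfun r z₀ z).re = (-1 / z₀ : ℂ).re := by
  have hr : |r| < 1 := abs_lt.2 ⟨by linarith, hr1⟩
  have hz₀ : z₀ ≠ 0 := norm_pos_iff.1 (hr0.trans hz₀l)
  refine ⟨fun z hz hθ _ hθ' _ => pfun_reflect hr hr0.ne' hz₀ hz hθ hθ', fun z hzr hθ _ => ?_⟩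
  have hz : z ≠ 0 := norm_pos_iff.1 (hzr ▸ hr0)
  have hcircle : (r : ℂ) ^ 2 / conj z = z := by
    rw [div_eq_iff ((map_ne_zero _).2 hz), mul_conj', hzr]
  have hsum := pfun_reflect hr hr0.ne' hz₀ hz hθ (by rwa [hcircle])
  have hconst : -1 / z₀ - 1 / conj z₀ = -1 / z₀ + conj (-1 / z₀) := by
    rw [map_div₀, map_neg, map_one]
    ring
  rw [hcircle, add_conj, hconst, add_conj, ofReal_inj] at hsum
  linarith

theorem stmt14 (r : ℝ) (hr0 : 0 < r) (hr1 : r < 1)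
    (z₀ : ℂ) (hz₀l : r < ‖z₀‖) (hz₀u : ‖z₀‖ < 1) :
    (∀ z : ℂ, z ≠ 0 →
      theta1 r ((starRingEnd ℂ) z₀ * z) ≠ 0 → theta1 r (z₀ / z) ≠ 0 →
      theta1 r ((starRingEnd ℂ) z₀ * ((r : ℂ) ^ 2 / (starRingEnd ℂ) z)) ≠ 0 →
      theta1 r (z₀ / ((r : ℂ) ^ 2 / (starRingEnd ℂ) z)) ≠ 0 →
      pfun r z₀ ((r : ℂ) ^ 2 / (starRingEnd ℂ) z) + (starRingEnd ℂ) (pfun r z₀ z)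
        = -1 / z₀ - 1 / (starRingEnd ℂ) z₀) ∧
    ∀ z : ℂ, ‖z‖ = r →
      theta1 r ((starRingEnd ℂ) z₀ * z) ≠ 0 → theta1 r (z₀ / z) ≠ 0 →
      (pfun r z₀ z).re = (-1 / z₀ : ℂ).re :=
  stmt14_general r hr0 hr1 z₀ hz₀l
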